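/- Let ρ be a density operator, Λ a measurement operator with Tr[Λρ] > 0, σ a positive semi-definite operator, and set ρ̃ := √Λ ρ √Λ / Tr[Λρ]. Then F(ρ̃, σ) = F(ρ, √Λ σ √Λ) / Tr[Λρ], where F(A,B) = ‖√A √B‖₁². -/

import Mathlib

open Matrix Kronecker ComplexOrder

/-- The square root of a PSD matrix, as `Matrix.PosSemidef.sqrt` was defined in Mathlib (Dec 2024). -/
noncomputable def Matrix.PosSemidef.psdSqrtOld {n : Type*} [Fintype n] [DecidableEq n]
    {A : Matrix n n ℂ} (hA : A.PosSemidef) : Matrix n n ℂ :=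
  hA.1.eigenvectorUnitary.1 * diagonal ((↑) ∘ (√·) ∘ hA.1.eigenvalues) *
  (star hA.1.eigenvectorUnitary : Matrix n n ℂ)

/-- The trace norm ‖A‖₁ = Tr √(AᴴA). -/
noncomputable def traceNorm {n : Type*} [Fintype n] [DecidableEq n] (A : Matrix n n ℂ) : ℝ :=
  ((Matrix.posSemidef_conjTranspose_mul_self A).psdSqrtOld).trace.re

/-- The positive-semidefinite square root of a matrix (0 if not PSD). -/
noncomputable def msqrt {n : Type*} [Fintype n] [DecidableEq n] (A : Matrix n n ℂ) :
    Matrix n n ℂ :=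
  open scoped Classical in
  if h : A.PosSemidef then h.psdSqrtOld else 0

/-- Uhlmann fidelity F(A,B) = ‖√A √B‖₁² of positive semi-definite operators. -/
noncomputable def fid {n : Type*} [Fintype n] [DecidableEq n] (A B : Matrix n n ℂ) : ℝ :=
  (traceNorm (msqrt A * msqrt B)) ^ 2

/-!
The trace norm `‖X‖₁ = Tr √(XᴴX)` depends only on the spectrum of `XᴴX`, which is also that of
`XXᴴ`; in particular `‖Xᴴ‖₁ = ‖X‖₁`. For any `S`, put `Y = √ρ Sᴴ √σ`. Then `√(SρSᴴ) √σ` and `Y`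
have the same `(·)ᴴ(·) = √σ SρSᴴ √σ`, and likewise `‖√ρ √(SᴴσS)‖₁ = ‖√σ S √ρ‖₁ = ‖Yᴴ‖₁`, so
`F(SρSᴴ, σ) = F(ρ, SᴴσS)`. With `S = √Λ`, the normalisation by `Tr[Λρ]` comes out of the square
root as `Tr[Λρ]^(-1/2)` and squares to the claimed factor.
-/

open scoped MatrixOrder

namespace Matrix

variable {n : Type*} [Fintype n] [DecidableEq n]

lemma PosSemidef.psdSqrtOld_eq_sqrt {A : Matrix n n ℂ} (hA : A.PosSemidef) :
    hA.psdSqrtOld = CFC.sqrt A := by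
  rw [CFC.sqrt_eq_real_sqrt A hA.nonneg, cfcₙ_eq_cfc, hA.1.cfc_eq]
  rfl

lemma IsHermitian.trace_cfc {A : Matrix n n ℂ} (hA : A.IsHermitian) (f : ℝ → ℝ) :
    (cfc f A).trace = ∑ i, (f (hA.eigenvalues i) : ℂ) := by
  rw [hA.cfc_eq, IsHermitian.cfc, Unitary.conjStarAlgAut_apply, trace_mul_cycle,
    Unitary.coe_star_mul_self, one_mul, trace_diagonal]
  rfl

lemma PosSemidef.re_trace_sqrt {A : Matrix n n ℂ} (hA : A.PosSemidef) :
    (CFC.sqrt A).trace.re = (A.charpoly.roots.map fun z => √z.re).sum := by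
  rw [CFC.sqrt_eq_real_sqrt A hA.nonneg, cfcₙ_eq_cfc, hA.1.trace_cfc,
    hA.1.roots_charpoly_eq_eigenvalues, Multiset.map_map, Complex.re_sum]
  exact Finset.sum_eq_multiset_sum _ _

end Matrix

section

variable {n : Type*} [Fintype n] [DecidableEq n]

lemma msqrt_of_posSemidef {A : Matrix n n ℂ} (hA : A.PosSemidef) : msqrt A = CFC.sqrt A := by
  rw [msqrt, dif_pos hA, hA.psdSqrtOld_eq_sqrt]

lemma msqrt_isHermitian (A : Matrix n n ℂ) : (msqrt A).IsHermitian := by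
  by_cases hA : A.PosSemidef
  · rw [msqrt_of_posSemidef hA]
    exact (CFC.sqrt_nonneg A).posSemidef.isHermitian
  · rw [msqrt, dif_neg hA]
    exact isHermitian_zero

lemma msqrt_mul_self {A : Matrix n n ℂ} (hA : A.PosSemidef) : msqrt A * msqrt A = A := by
  rw [msqrt_of_posSemidef hA, CFC.sqrt_mul_sqrt_self A hA.nonneg]

lemma msqrt_smul {A : Matrix n n ℂ} (hA : A.PosSemidef) {r : ℝ} (hr : 0 ≤ r) :
    msqrt (r • A) = √r • msqrt A := by
  rw [msqrt_of_posSemidef (hA.smul hr), msqrt_of_posSemidef hA]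
  refine CFC.sqrt_unique ?_ (smul_nonneg (Real.sqrt_nonneg r) (CFC.sqrt_nonneg A))
  rw [smul_mul_smul_comm, CFC.sqrt_mul_sqrt_self A hA.nonneg, Real.mul_self_sqrt hr]

lemma traceNorm_eq_re_trace_sqrt (X : Matrix n n ℂ) :
    traceNorm X = (CFC.sqrt (Xᴴ * X)).trace.re := by
  rw [traceNorm, PosSemidef.psdSqrtOld_eq_sqrt]

lemma traceNorm_eq_of_charpoly_eq {X Y : Matrix n n ℂ}
    (h : (Xᴴ * X).charpoly = (Yᴴ * Y).charpoly) : traceNorm X = traceNorm Y := by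
  rw [traceNorm_eq_re_trace_sqrt, traceNorm_eq_re_trace_sqrt,
    (posSemidef_conjTranspose_mul_self X).re_trace_sqrt,
    (posSemidef_conjTranspose_mul_self Y).re_trace_sqrt, h]

lemma traceNorm_conjTranspose (X : Matrix n n ℂ) : traceNorm Xᴴ = traceNorm X :=
  traceNorm_eq_of_charpoly_eq <| by rw [conjTranspose_conjTranspose, charpoly_mul_comm]

lemma traceNorm_smul (X : Matrix n n ℂ) {r : ℝ} (hr : 0 ≤ r) :
    traceNorm (r • X) = r * traceNorm X := by
  have hXX : (0 : Matrix n n ℂ) ≤ Xᴴ * X := (posSemidef_conjTranspose_mul_self X).nonneg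
  have hsq : CFC.sqrt ((r • X)ᴴ * (r • X)) = r • CFC.sqrt (Xᴴ * X) := by
    refine CFC.sqrt_unique ?_ (smul_nonneg hr (CFC.sqrt_nonneg _))
    rw [smul_mul_smul_comm, CFC.sqrt_mul_sqrt_self _ hXX, conjTranspose_smul, star_trivial,
      smul_mul_smul_comm]
  rw [traceNorm_eq_re_trace_sqrt, traceNorm_eq_re_trace_sqrt, hsq, trace_smul,
    Complex.real_smul, Complex.re_ofReal_mul]

lemma fid_comm (A B : Matrix n n ℂ) : fid A B = fid B A := by
  rw [fid, fid, ← traceNorm_conjTranspose, conjTranspose_mul, (msqrt_isHermitian A).eq,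
    (msqrt_isHermitian B).eq]

lemma fid_smul_left {A : Matrix n n ℂ} (hA : A.PosSemidef) (B : Matrix n n ℂ) {r : ℝ}
    (hr : 0 ≤ r) : fid (r • A) B = r * fid A B := by
  rw [fid, fid, msqrt_smul hA hr, smul_mul_assoc, traceNorm_smul _ (Real.sqrt_nonneg r), mul_pow,
    Real.sq_sqrt hr]

lemma conjTranspose_mul_self_msqrt_mul_msqrt {A : Matrix n n ℂ} (hA : A.PosSemidef)
    (B : Matrix n n ℂ) : (msqrt A * msqrt B)ᴴ * (msqrt A * msqrt B) = msqrt B * A * msqrt B := by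
  rw [conjTranspose_mul, (msqrt_isHermitian A).eq, (msqrt_isHermitian B).eq, mul_assoc,
    ← mul_assoc (msqrt A), msqrt_mul_self hA, mul_assoc]

lemma traceNorm_msqrt_conj_mul_msqrt {A B : Matrix n n ℂ} (hA : A.PosSemidef)
    (S : Matrix n n ℂ) :
    traceNorm (msqrt (S * A * Sᴴ) * msqrt B) = traceNorm (msqrt A * Sᴴ * msqrt B) := by
  refine traceNorm_eq_of_charpoly_eq (congrArg charpoly ?_)
  rw [conjTranspose_mul_self_msqrt_mul_msqrt (hA.mul_mul_conjTranspose_same S)]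
  simp only [conjTranspose_mul, conjTranspose_conjTranspose, (msqrt_isHermitian _).eq, mul_assoc]
  rw [← mul_assoc (msqrt A) (msqrt A), msqrt_mul_self hA]

lemma fid_mul_mul_conjTranspose {A B : Matrix n n ℂ} (hA : A.PosSemidef) (hB : B.PosSemidef)
    (S : Matrix n n ℂ) : fid (S * A * Sᴴ) B = fid A (Sᴴ * B * S) := by
  have hSBS := traceNorm_msqrt_conj_mul_msqrt hB Sᴴ (B := A)
  rw [conjTranspose_conjTranspose] at hSBS
  rw [fid_comm A, fid, fid, traceNorm_msqrt_conj_mul_msqrt hA, hSBS,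
    ← traceNorm_conjTranspose (msqrt B * S * msqrt A)]
  simp only [conjTranspose_mul, (msqrt_isHermitian _).eq, mul_assoc]

end

theorem stmt2_general {n : Type*} [Fintype n] [DecidableEq n] (ρ Λ σ : Matrix n n ℂ)
    (hρ : ρ.PosSemidef) (hσ : σ.PosSemidef)
    (hpos : 0 < (Λ * ρ).trace.re) :
    fid ((((Λ * ρ).trace.re)⁻¹ : ℝ) • (msqrt Λ * ρ * msqrt Λ)) σ =
      fid ρ (msqrt Λ * σ * msqrt Λ) / (Λ * ρ).trace.re := by
  have hS : (msqrt Λ)ᴴ = msqrt Λ := (msqrt_isHermitian Λ).eq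
  have hconj := fid_mul_mul_conjTranspose hρ hσ (msqrt Λ)
  have hM := hρ.mul_mul_conjTranspose_same (msqrt Λ)
  rw [hS] at hconj hM
  rw [fid_smul_left hM σ (inv_nonneg.mpr hpos.le), hconj, inv_mul_eq_div]

theorem stmt2 {n : Type*} [Fintype n] [DecidableEq n] (ρ Λ σ : Matrix n n ℂ)
    (hρ : ρ.PosSemidef) (hρtr : ρ.trace = 1)
    (hΛ : Λ.PosSemidef) (hΛI : (1 - Λ).PosSemidef) (hσ : σ.PosSemidef)
    (hpos : 0 < (Λ * ρ).trace.re) :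
    fid ((((Λ * ρ).trace.re)⁻¹ : ℝ) • (msqrt Λ * ρ * msqrt Λ)) σ =
      fid ρ (msqrt Λ * σ * msqrt Λ) / (Λ * ρ).trace.re :=
  stmt2_general ρ Λ σ hρ hσ hpos
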